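/- arXiv:math/0703369 — 7 statements merged into one kernel-verified Lean document; each statement's English description precedes it below -/
import Mathlib

section
/- If C is a 2p×2p complex matrix with C = C* and C j C = j, where j = diag(I_p, -I_p), and C is positive definite, then both C + j and C - j are positive semidefinite. -/
open Matrix
open scoped ComplexOrder

lemma half_smul_posSemidef {n : Type*} [Fintype n] {M : Matrix n n ℂ}
    (hM : M.PosSemidef) : ((2:ℂ)⁻¹ • M).PosSemidef := by
  refine posSemidef_iff_dotProduct_mulVec.mpr ⟨?_, fun x => ?_⟩
  · simp [Matrix.IsHermitian, conjTranspose_smul, hM.1.eq]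
  · have h := hM.dotProduct_mulVec_nonneg x
    rw [smul_mulVec, dotProduct_smul, smul_eq_mul]
    refine mul_nonneg ?_ h
    rw [Complex.le_def]
    norm_num

lemma key {n : Type*} [Fintype n] [DecidableEq n]
    {C j S : Matrix n n ℂ} (hC : C.IsHermitian) (hjH : j.IsHermitian)
    (hjj : j * j = 1) (hCjC : C * j * C = j) (hpos : C.PosDef)
    (hSH : S.IsHermitian) (hS : S * S = C) (hSd : IsUnit S.det) :
    ∀ ε : ℂ, ε = 1 ∨ ε = -1 → (C + ε • j).PosSemidef := by
  intro ε hε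
  have hjCj : C⁻¹ = j * C * j := by
    apply Matrix.inv_eq_left_inv
    calc j * C * j * C = j * (C * j * C) := by simp only [Matrix.mul_assoc]
    _ = 1 := by rw [hCjC, hjj]
  have hCinv : S * C⁻¹ * S = 1 := by
    have : C⁻¹ = S⁻¹ * S⁻¹ := by rw [← hS, Matrix.mul_inv_rev]
    rw [this, show S * (S⁻¹ * S⁻¹) * S = (S * S⁻¹) * (S⁻¹ * S) from by
        simp only [Matrix.mul_assoc],
      Matrix.mul_nonsing_inv _ hSd, Matrix.nonsing_inv_mul _ hSd, Matrix.one_mul]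
  obtain ⟨A, hA⟩ : ∃ A : Matrix n n ℂ, A = ε • (S * j * S) := ⟨_, rfl⟩
  have hAH : A.IsHermitian := by
    have hst : star ε = ε := by rcases hε with h | h <;> simp [h]
    rw [Matrix.IsHermitian, hA, conjTranspose_smul, hst]
    congr 1
    rw [conjTranspose_mul, conjTranspose_mul, hSH.eq, hjH.eq, Matrix.mul_assoc]
  have hA2 : A * A = 1 := by
    have hε2 : ε * ε = 1 := by rcases hε with h | h <;> simp [h]
    rw [hA, Matrix.smul_mul, Matrix.mul_smul, smul_smul, hε2, one_smul]
    calc S * j * S * (S * j * S) = S * (j * (S * S) * j) * S := by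
          simp only [Matrix.mul_assoc]
    _ = S * C⁻¹ * S := by rw [hS, ← hjCj, Matrix.mul_assoc]
    _ = 1 := hCinv
  have hB : (1 + A) = (2:ℂ)⁻¹ • ((1 + A)ᴴ * (1 + A)) := by
    have : (1 + A)ᴴ = 1 + A := by
      rw [conjTranspose_add, hAH.eq, conjTranspose_one]
    rw [this]
    have : (1 + A) * (1 + A) = (2:ℂ) • (1 + A) := by
      rw [add_mul, mul_add, mul_add, hA2, one_mul, mul_one, two_smul]
      simp only [one_mul]
      abel
    rw [this, smul_smul]
    norm_num
  have hPSD : (1 + A).PosSemidef := by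
    rw [hB]
    exact half_smul_posSemidef (Matrix.posSemidef_conjTranspose_mul_self _)
  have hfinal : C + ε • j = S * (1 + A) * Sᴴ := by
    rw [hSH.eq, hA, Matrix.mul_add, Matrix.mul_one, Matrix.add_mul, hS,
      Matrix.mul_smul, Matrix.smul_mul]
    congr 1
    rw [show S * (S * j * S) * S = (S * S) * j * (S * S) from by
      simp only [Matrix.mul_assoc], hS, hCjC]
  rw [hfinal]
  exact hPSD.mul_mul_conjTranspose_same S

theorem stmt0 (p : ℕ) (hp : 1 ≤ p)
    (C : Matrix (Fin p ⊕ Fin p) (Fin p ⊕ Fin p) ℂ)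
    (j : Matrix (Fin p ⊕ Fin p) (Fin p ⊕ Fin p) ℂ)
    (hj : j = Matrix.fromBlocks 1 0 0 (-1))
    (hC : C.IsHermitian) (hCjC : C * j * C = j) (hpos : C.PosDef) :
    (C + j).PosSemidef ∧ (C - j).PosSemidef := by
  have hjH : j.IsHermitian := by
    subst hj
    rw [Matrix.IsHermitian]
    simp [Matrix.fromBlocks_conjTranspose]
  have hjj : j * j = 1 := by
    subst hj
    rw [Matrix.fromBlocks_multiply]
    simp [← Matrix.fromBlocks_one]
  set S := (open scoped MatrixOrder in CFC.sqrt C) with hSdef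
  have hSH : S.IsHermitian := open scoped MatrixOrder in (CFC.sqrt_nonneg C).posSemidef.isHermitian
  have hS : S * S = C := open scoped MatrixOrder in CFC.sqrt_mul_sqrt_self C hpos.posSemidef.nonneg
  have hSd : IsUnit S.det := by
    have hCd : IsUnit C.det := hpos.isUnit.map (Matrix.detMonoidHom)
    rw [← hS, Matrix.det_mul] at hCd
    exact isUnit_of_mul_isUnit_left hCd
  have h := key hC hjH hjj hCjC hpos hSH hS hSd
  constructor
  · have := h 1 (Or.inl rfl); rwa [one_smul] at this
  · have := h (-1) (Or.inr rfl); rwa [neg_smul, one_smul, ← sub_eq_add_neg] at this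
end

section
/- If C is a 2p×2p Hermitian matrix with C j C = j, where j = diag(I_p, -I_p), and ε is a complex scalar with |ε| < 1, then C + ε j is invertible, provided C is positive definite. -/
/-! With `M = j C` one has `M² = j (C j C) = j² = 1`, so `C + ε j = C (1 + ε M)` and
`(1 + ε M)(1 - ε M) = (1 - ε²) 1`. Hence `C + ε j` is invertible as soon as `ε² ≠ 1`, and `C`
itself is invertible with inverse `j C j`. -/

open Matrix
open scoped ComplexOrder

theorem isUnit_of_mul_mul_eq_self_of_mul_self_eq_one {M : Type*} [Monoid M] {c j : M}
    (hj : j * j = 1) (hc : c * j * c = j) : IsUnit c :=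
  ⟨⟨c, j * c * j, by rw [← mul_assoc, ← mul_assoc, hc, hj],
    by rw [mul_assoc, mul_assoc, ← mul_assoc c, hc, hj]⟩, rfl⟩

theorem isUnit_one_add_smul_of_mul_self_eq_one {K A : Type*} [Field K] [Ring A] [Algebra K A]
    {m : A} (hm : m * m = 1) {ε : K} (hε : ε ^ 2 ≠ 1) : IsUnit (1 + ε • m) := by
  have hunit : (1 - ε ^ 2) ≠ 0 := sub_ne_zero.mpr (Ne.symm hε)
  have hright : (1 + ε • m) * (1 - ε • m) = (1 - ε ^ 2) • (1 : A) := by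
    rw [add_mul, one_mul, mul_sub, mul_one, smul_mul_smul, hm]
    module
  have hleft : (1 - ε • m) * (1 + ε • m) = (1 - ε ^ 2) • (1 : A) := by
    rw [sub_mul, one_mul, mul_add, mul_one, smul_mul_smul, hm]
    module
  refine ⟨⟨1 + ε • m, (1 - ε ^ 2)⁻¹ • (1 - ε • m), ?_, ?_⟩, rfl⟩
  · rw [mul_smul_comm, hright, smul_smul, inv_mul_cancel₀ hunit, one_smul]
  · rw [smul_mul_assoc, hleft, smul_smul, inv_mul_cancel₀ hunit, one_smul]

theorem isUnit_add_smul_of_mul_mul_eq_self {K A : Type*} [Field K] [Ring A] [Algebra K A]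
    {c j : A} (hj : j * j = 1) (hc : c * j * c = j) {ε : K} (hε : ε ^ 2 ≠ 1) :
    IsUnit (c + ε • j) := by
  have hfactor : c + ε • j = c * (1 + ε • (j * c)) := by
    rw [mul_add, mul_one, mul_smul_comm, ← mul_assoc, hc]
  have hsq : j * c * (j * c) = 1 := by
    rw [mul_assoc, ← mul_assoc c, hc, hj]
  rw [hfactor]
  exact (isUnit_of_mul_mul_eq_self_of_mul_self_eq_one hj hc).mul
    (isUnit_one_add_smul_of_mul_self_eq_one hsq hε)

theorem Matrix.fromBlocks_one_zero_zero_neg_one_mul_self {m n α : Type*} [Fintype m] [Fintype n]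
    [DecidableEq m] [DecidableEq n] [Ring α] :
    fromBlocks (1 : Matrix m m α) 0 0 (-1 : Matrix n n α) * fromBlocks 1 0 0 (-1) = 1 := by
  rw [fromBlocks_multiply, ← fromBlocks_one]
  simp

theorem stmt1_general (p : ℕ)
    (C : Matrix (Fin p ⊕ Fin p) (Fin p ⊕ Fin p) ℂ)
    (j : Matrix (Fin p ⊕ Fin p) (Fin p ⊕ Fin p) ℂ)
    (hj : j = Matrix.fromBlocks 1 0 0 (-1))
    (hCjC : C * j * C = j)
    (ε : ℂ) (hε : ‖ε‖ < 1) :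
    IsUnit (C + ε • j) := by
  have hj2 : j * j = 1 := hj ▸ fromBlocks_one_zero_zero_neg_one_mul_self
  have hε2 : ε ^ 2 ≠ 1 := fun h => by
    have : ‖ε‖ ^ 2 = 1 := by rw [← norm_pow, h, norm_one]
    nlinarith [norm_nonneg ε]
  exact isUnit_add_smul_of_mul_mul_eq_self hj2 hCjC hε2

theorem stmt1 (p : ℕ) (hp : 1 ≤ p)
    (C : Matrix (Fin p ⊕ Fin p) (Fin p ⊕ Fin p) ℂ)
    (j : Matrix (Fin p ⊕ Fin p) (Fin p ⊕ Fin p) ℂ)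
    (hj : j = Matrix.fromBlocks 1 0 0 (-1))
    (hC : C.IsHermitian) (hCjC : C * j * C = j) (hpos : C.PosDef)
    (ε : ℂ) (hε : ‖ε‖ < 1) :
    IsUnit (C + ε • j) :=
  stmt1_general p C j hj hCjC ε hε
end

section
/- Suppose sequences of matrices satisfy the identity A S_k - S_k A* = i Π_k j Π_k*, together with the recursions Π_{k+1} = Π_k + i A^{-1} Π_k j and S_{k+1} = S_k + A^{-1} S_k (A*)^{-1} + A^{-1} Π_k Π_k* (A*)^{-1}. Then A S_{k+1} - S_{k+1} A* = i Π_{k+1} j Π_{k+1}*. -/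
/-!
Conjugating the identity by `A⁻¹ ⋯ (A*)⁻¹` gives `S (A*)⁻¹ - A⁻¹ S = i A⁻¹ Π j Π* (A*)⁻¹`, so
`A S_{k+1} - S_{k+1} A*` equals `i Π j Π* + i A⁻¹ Π j Π* (A*)⁻¹ + Π Π* (A*)⁻¹ - A⁻¹ Π Π*`.
Since `j* = j` and `j² = 1`, expanding `i Π_{k+1} j Π_{k+1}*` produces the same four terms.
-/

open Matrix

theorem Matrix.fromBlocks_one_neg_one_isHermitian {m n α : Type*} [DecidableEq m] [DecidableEq n]
    [Ring α] [StarRing α] :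
    (fromBlocks 1 0 0 (-1) : Matrix (m ⊕ n) (m ⊕ n) α).IsHermitian := by
  simp [IsHermitian, fromBlocks_conjTranspose]

theorem Matrix.fromBlocks_one_neg_one_mul_self {m n α : Type*} [Fintype m] [Fintype n]
    [DecidableEq m] [DecidableEq n] [Ring α] :
    (fromBlocks 1 0 0 (-1) : Matrix (m ⊕ n) (m ⊕ n) α) * fromBlocks 1 0 0 (-1) = 1 := by
  simp [fromBlocks_multiply, ← fromBlocks_one]

theorem mul_sub_mul_add_inv_sandwich {R : Type*} [Ring R] {a a' b c s q : R}
    (hab : a * b = 1) (hba : b * a = 1) (hca' : c * a' = 1) (ha'c : a' * c = 1) :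
    a * (s + b * s * c + b * q * c) - (s + b * s * c + b * q * c) * a'
      = (a * s - s * a') + b * (a * s - s * a') * c + (q * c - b * q) := by
  have hs_left : a * (b * s * c) = s * c := by rw [← mul_assoc, ← mul_assoc, hab, one_mul]
  have hq_left : a * (b * q * c) = q * c := by rw [← mul_assoc, ← mul_assoc, hab, one_mul]
  have hs_right : b * s * c * a' = b * s := by rw [mul_assoc, hca', mul_one]
  have hq_right : b * q * c * a' = b * q := by rw [mul_assoc, hca', mul_one]
  have hsandwich : b * (a * s - s * a') * c = s * c - b * s := by
    rw [mul_sub, sub_mul, ← mul_assoc, hba, one_mul, mul_assoc, mul_assoc, ha'c, mul_one]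
  rw [mul_add, mul_add, add_mul, add_mul, hs_left, hq_left, hs_right, hq_right, hsandwich]
  abel

theorem I_smul_add_I_smul_mul_mul_conjTranspose {n m : Type*} [Fintype m] [Fintype n]
    [DecidableEq m] {j : Matrix m m ℂ} (hjH : j.IsHermitian) (hjj : j * j = 1)
    (B : Matrix n n ℂ) (Pi : Matrix n m ℂ) :
    Complex.I • ((Pi + Complex.I • (B * Pi * j)) * j * (Pi + Complex.I • (B * Pi * j))ᴴ)
      = Complex.I • (Pi * j * Piᴴ) + Complex.I • (B * (Pi * j * Piᴴ) * Bᴴ)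
        + (Pi * Piᴴ * Bᴴ - B * (Pi * Piᴴ)) := by
  have hjj' (X : Matrix m n ℂ) : j * (j * X) = X := by rw [← Matrix.mul_assoc, hjj, Matrix.one_mul]
  simp only [conjTranspose_add, conjTranspose_smul, conjTranspose_mul, hjH.eq, Complex.star_def,
    Complex.conj_I, Matrix.add_mul, Matrix.mul_add, Matrix.smul_mul, Matrix.mul_smul, smul_add,
    smul_smul, Matrix.mul_assoc, hjj', neg_smul, smul_neg, Matrix.mul_neg, Complex.I_mul_I,
    one_smul]
  abel

theorem stmt3_general (n p : ℕ)
    (A S : Matrix (Fin n) (Fin n) ℂ)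
    (Pi : Matrix (Fin n) (Fin p ⊕ Fin p) ℂ)
    (j : Matrix (Fin p ⊕ Fin p) (Fin p ⊕ Fin p) ℂ)
    (hj : j = Matrix.fromBlocks 1 0 0 (-1))
    (hA : IsUnit A.det)
    (hid : A * S - S * Aᴴ = Complex.I • (Pi * j * Piᴴ))
    (Pi' : Matrix (Fin n) (Fin p ⊕ Fin p) ℂ)
    (S' : Matrix (Fin n) (Fin n) ℂ)
    (hPi' : Pi' = Pi + Complex.I • (A⁻¹ * Pi * j))
    (hS' : S' = S + A⁻¹ * S * (Aᴴ)⁻¹ + A⁻¹ * Pi * Piᴴ * (Aᴴ)⁻¹) :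
    A * S' - S' * Aᴴ = Complex.I • (Pi' * j * Pi'ᴴ) := by
  have hAH : IsUnit Aᴴ.det := by
    rw [det_conjTranspose]
    exact hA.star
  subst hPi' hS' hj
  rw [Matrix.mul_assoc A⁻¹ Pi Piᴴ,
    mul_sub_mul_add_inv_sandwich (mul_nonsing_inv A hA) (nonsing_inv_mul A hA)
      (nonsing_inv_mul _ hAH) (mul_nonsing_inv _ hAH),
    I_smul_add_I_smul_mul_mul_conjTranspose fromBlocks_one_neg_one_isHermitian
      fromBlocks_one_neg_one_mul_self, conjTranspose_nonsing_inv, hid, Matrix.mul_smul,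
    Matrix.smul_mul]

theorem stmt3 (n p : ℕ) (hn : 1 ≤ n) (hp : 1 ≤ p)
    (A S : Matrix (Fin n) (Fin n) ℂ)
    (Pi : Matrix (Fin n) (Fin p ⊕ Fin p) ℂ)
    (j : Matrix (Fin p ⊕ Fin p) (Fin p ⊕ Fin p) ℂ)
    (hj : j = Matrix.fromBlocks 1 0 0 (-1))
    (hA : IsUnit A.det) (hS : S.IsHermitian)
    (hid : A * S - S * Aᴴ = Complex.I • (Pi * j * Piᴴ))
    (Pi' : Matrix (Fin n) (Fin p ⊕ Fin p) ℂ)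
    (S' : Matrix (Fin n) (Fin n) ℂ)
    (hPi' : Pi' = Pi + Complex.I • (A⁻¹ * Pi * j))
    (hS' : S' = S + A⁻¹ * S * (Aᴴ)⁻¹ + A⁻¹ * Pi * Piᴴ * (Aᴴ)⁻¹) :
    A * S' - S' * Aᴴ = Complex.I • (Pi' * j * Pi'ᴴ) :=
  stmt3_general n p A S Pi j hj hA hid Pi' S' hPi' hS'
end

section
/- If β(k) and β(k+1) are p×m matrices (m = 2p) with β(k) j β(k)* = I_p and β(k+1) j β(k+1)* = I_p, then the p×p matrix β(k) j β(k+1)* is invertible. -/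
/-!
If `(b₀ j b₁ᴴ) v = 0` with `v ≠ 0`, then on the span of the columns of `b₀ᴴ` and of `b₁ᴴ v` the
Gram matrix of the indefinite form `x ↦ xᴴ j x` is `diag(1, ‖v‖²)`, so this `(p + 1)`-dimensional
space is `j`-positive. But a `j`-positive subspace meets the `p`-dimensional space
`{x | x ∘ Sum.inl = 0}`, on which the form is `≤ 0`, only in `0`, so its dimension is at most `p`.
-/

open Matrix

open scoped ComplexOrder

namespace Matrix

variable {ι ι' κ κ₀ κ₁ : Type*} [Fintype ι] [Fintype ι'] [Fintype κ] [Fintype κ₀] [Fintype κ₁]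

lemma dotProduct_fromBlocks_one_neg_one_mulVec {R : Type*} [Ring R] [DecidableEq ι]
    [DecidableEq ι'] (x y : ι ⊕ ι' → R) :
    x ⬝ᵥ (fromBlocks 1 0 0 (-1) *ᵥ y) =
      x ∘ Sum.inl ⬝ᵥ y ∘ Sum.inl - x ∘ Sum.inr ⬝ᵥ y ∘ Sum.inr := by
  rw [fromBlocks_mulVec, ← Sum.elim_comp_inl_inr x, sumElim_dotProduct_sumElim]
  simp [sub_eq_add_neg, neg_mulVec]

lemma PosDef.fromBlocks_zero_zero {R : Type*} [CommRing R] [PartialOrder R] [StarRing R]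
    [IsOrderedAddMonoid R] {A : Matrix κ₀ κ₀ R} {D : Matrix κ κ R}
    (hA : A.PosDef) (hD : D.PosDef) : (fromBlocks A 0 0 D).PosDef := by
  refine .of_dotProduct_mulVec_pos (hA.isHermitian.fromBlocks (by simp) hD.isHermitian)
    fun x hx => ?_
  rw [fromBlocks_mulVec, ← Sum.elim_comp_inl_inr x]
  simp only [Function.star_sumElim, sumElim_dotProduct_sumElim, Sum.elim_comp_inl,
    Sum.elim_comp_inr, zero_mulVec, add_zero, zero_add]
  have h₁ := hA.posSemidef.dotProduct_mulVec_nonneg (x ∘ Sum.inl)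
  have h₂ := hD.posSemidef.dotProduct_mulVec_nonneg (x ∘ Sum.inr)
  by_cases hx₁ : x ∘ Sum.inl = 0
  · have hx₂ : x ∘ Sum.inr ≠ 0 := fun hx₂ =>
      hx (by rw [← Sum.elim_comp_inl_inr x, hx₁, hx₂]; simp)
    exact add_pos_of_nonneg_of_pos h₁ (hD.dotProduct_mulVec_pos hx₂)
  · exact add_pos_of_pos_of_nonneg (hA.dotProduct_mulVec_pos hx₁) h₂

theorem card_le_of_posDef_conjTranspose_mul_fromBlocks_mul [DecidableEq ι] [DecidableEq ι']
    (C : Matrix (ι ⊕ ι') κ ℂ)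
    (hC : (Cᴴ * (fromBlocks 1 0 0 (-1) : Matrix (ι ⊕ ι') (ι ⊕ ι') ℂ) * C).PosDef) :
    Fintype.card κ ≤ Fintype.card ι := by
  by_contra! hlt
  obtain ⟨y, hy, hCy⟩ : ∃ y ∈ LinearMap.ker C.toRows₁.mulVecLin, y ≠ 0 :=
    Submodule.exists_mem_ne_zero_of_ne_bot
      (LinearMap.ker_ne_bot_of_finrank_lt (by simpa using hlt))
  have hpos := hC.dotProduct_mulVec_pos hCy
  rw [← mulVec_mulVec, ← mulVec_mulVec, dotProduct_mulVec, ← star_mulVec,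
    dotProduct_fromBlocks_one_neg_one_mulVec] at hpos
  have hinl : (C *ᵥ y) ∘ Sum.inl = 0 := hy
  change 0 < star ((C *ᵥ y) ∘ Sum.inl) ⬝ᵥ _ - star ((C *ᵥ y) ∘ Sum.inr) ⬝ᵥ _ at hpos
  rw [hinl] at hpos
  simp only [star_zero, zero_dotProduct, zero_sub, Left.neg_pos_iff] at hpos
  exact hpos.not_ge (dotProduct_star_self_nonneg _)

theorem card_add_card_le_of_mul_conjTranspose_mul_eq_zero [DecidableEq ι] [DecidableEq ι']
    [DecidableEq κ₀] [DecidableEq κ₁] {j : Matrix (ι ⊕ ι') (ι ⊕ ι') ℂ}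
    (hj : j = fromBlocks 1 0 0 (-1))
    {b₀ : Matrix κ₀ (ι ⊕ ι') ℂ} {b₁ : Matrix κ₁ (ι ⊕ ι') ℂ}
    (h₀ : b₀ * j * b₀ᴴ = 1) (h₁ : b₁ * j * b₁ᴴ = 1)
    {R : Matrix κ₁ κ ℂ} (hR : Function.Injective R.mulVec) (hker : b₀ * j * b₁ᴴ * R = 0) :
    Fintype.card κ₀ + Fintype.card κ ≤ Fintype.card ι := by
  have hjH : jᴴ = j := by simp [hj, fromBlocks_conjTranspose]
  have hblocks : (fromCols b₀ᴴ (b₁ᴴ * R))ᴴ * j * fromCols b₀ᴴ (b₁ᴴ * R) =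
      fromBlocks 1 0 0 (Rᴴ * R) := by
    have hker' : Rᴴ * b₁ * j * b₀ᴴ = 0 := by
      simpa [Matrix.mul_assoc, hjH] using congrArg conjTranspose hker
    rw [conjTranspose_fromCols_eq_fromRows_conjTranspose, fromRows_mul, fromRows_mul_fromCols]
    simp only [conjTranspose_conjTranspose, conjTranspose_mul, h₀]
    rw [← Matrix.mul_assoc, hker, hker', ← Matrix.mul_assoc, Matrix.mul_assoc Rᴴ,
      Matrix.mul_assoc Rᴴ, h₁, Matrix.mul_one]
  rw [← Fintype.card_sum]
  refine card_le_of_posDef_conjTranspose_mul_fromBlocks_mul (fromCols b₀ᴴ (b₁ᴴ * R)) ?_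
  rw [← hj, hblocks]
  exact PosDef.fromBlocks_zero_zero PosDef.one (PosDef.conjTranspose_mul_self R hR)

end Matrix

theorem stmt13_general (p : ℕ)
    (j : Matrix (Fin p ⊕ Fin p) (Fin p ⊕ Fin p) ℂ)
    (hj : j = Matrix.fromBlocks 1 0 0 (-1))
    (b0 b1 : Matrix (Fin p) (Fin p ⊕ Fin p) ℂ)
    (h0 : b0 * j * b0ᴴ = 1) (h1 : b1 * j * b1ᴴ = 1) :
    IsUnit (b0 * j * b1ᴴ).det := by
  rw [isUnit_iff_ne_zero]
  intro hdet
  obtain ⟨v, hv, hkerv⟩ := exists_mulVec_eq_zero_iff.mpr hdet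
  have hR : Function.Injective (replicateCol Unit v).mulVec := by
    intro z z' h
    obtain ⟨i, hi⟩ := Function.ne_iff.mp hv
    funext u
    exact (by simpa [mulVec, dotProduct] using congrFun h i : _ ∨ _).resolve_right hi
  have := card_add_card_le_of_mul_conjTranspose_mul_eq_zero hj h0 h1 hR
    (by rw [← replicateCol_mulVec, hkerv, replicateCol_zero])
  simp at this

theorem stmt13 (p : ℕ) (hp : 1 ≤ p)
    (j : Matrix (Fin p ⊕ Fin p) (Fin p ⊕ Fin p) ℂ)
    (hj : j = Matrix.fromBlocks 1 0 0 (-1))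
    (b0 b1 : Matrix (Fin p) (Fin p ⊕ Fin p) ℂ)
    (h0 : b0 * j * b0ᴴ = 1) (h1 : b1 * j * b1ᴴ = 1) :
    IsUnit (b0 * j * b1ᴴ).det :=
  stmt13_general p j hj b0 b1 h0 h1
end

section
/- If R is a positive definite m×m matrix (m = 2p) satisfying R j R = j with j = diag(I_p, -I_p), then R² j R² = j; conversely, if C > 0 is Hermitian with C j C = j and C = R² for the positive square root R, then R j R = j. -/
open Matrix
open scoped ComplexOrder

theorem stmt15 (p : ℕ) (hp : 1 ≤ p)
    (j R : Matrix (Fin p ⊕ Fin p) (Fin p ⊕ Fin p) ℂ)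
    (hj : j = Matrix.fromBlocks 1 0 0 (-1))
    (hR : R.PosDef) :
    (R * j * R = j → (R * R) * j * (R * R) = j) ∧
    ((R * R) * j * (R * R) = j → R * j * R = j) := by
  have hjj : j * j = 1 := by
    subst hj
    simp [Matrix.fromBlocks_multiply, ← Matrix.fromBlocks_one]
  have hjH : jᴴ = j := by
    rw [hj, Matrix.fromBlocks_conjTranspose]
    simp
  constructor
  · intro h
    have e : (R * R) * j * (R * R) = R * (R * j * R) * R := by noncomm_ring
    rw [e, h, h]
  · intro h
    have hRinv : IsUnit R := hR.isUnit
    -- j * (R*R) * j = (R*R)⁻¹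
    have hinv : (R * R)⁻¹ = j * (R * R) * j := by
      apply Matrix.inv_eq_left_inv
      calc (j * (R * R) * j) * (R * R) = j * ((R * R) * j * (R * R)) := by noncomm_ring
      _ = j * j := by rw [h]
      _ = 1 := hjj
    -- (j R j)² = (R⁻¹)²
    have hsq : (j * R * j) ^ 2 = (R⁻¹) ^ 2 := by
      have h1 : (j * R * j) ^ 2 = j * (R * R) * j := by
        rw [pow_two]
        calc (j * R * j) * (j * R * j) = j * R * (j * j) * R * j := by noncomm_ring
        _ = j * (R * R) * j := by rw [hjj]; noncomm_ring
      have h2 : (R⁻¹) ^ 2 = (R * R)⁻¹ := by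
        rw [pow_two, Matrix.mul_inv_rev]
      rw [h1, h2, hinv]
    have hP1 : (j * R * j).PosSemidef := by
      have := hR.posSemidef.conjTranspose_mul_mul_same j
      rwa [hjH] at this
    have hP2 : (R⁻¹).PosSemidef := hR.inv.posSemidef
    have heq : j * R * j = R⁻¹ := by
      open scoped MatrixOrder in exact (CFC.sq_eq_sq_iff _ _ hP1.nonneg hP2.nonneg).mp hsq
    -- conclude
    have : R * (j * R * j) = 1 := by
      rw [heq, Matrix.mul_nonsing_inv _ (Matrix.isUnit_iff_isUnit_det _ |>.mp hRinv)]
    calc R * j * R = R * j * R * (j * j) := by rw [hjj, mul_one]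
    _ = (R * (j * R * j)) * j := by noncomm_ring
    _ = j := by rw [this, one_mul]
end

section
/- Let A be the (N+1)p × (N+1)p block lower triangular Toeplitz matrix with diagonal blocks (i/2)I_p and all strictly lower triangular blocks equal to i I_p, and let Φ₁ be the (N+1)p × p column of identity blocks. Then Φ₁* (A + (λ/2) I)^{-1} = (2/(i+λ)) [q̂^N, q̂^{N-1}, …, q̂, I_p] where q̂ = ((λ-i)/(λ+i)) I_p, and hence Φ₁* (A + (λ/2) I)^{-1} Φ₁ = (2/(i+λ)) (q̂^{N+1} - I_p)(q̂ - I_p)^{-1}, for λ ∉ {-i, i}. -/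
open Matrix

lemma stmt17_aux_sum (q d e : ℂ) (N k : ℕ) (hk : k ≤ N) :
    ∑ m ∈ Finset.range (N+1), q ^ (N - m) * (if m = k then d else if k < m then e else 0)
      = q ^ (N - k) * d + e * ∑ r ∈ Finset.range (N - k), q ^ r := by
  have h1 : ∀ m ∈ Finset.range (N+1),
      q ^ (N - m) * (if m = k then d else if k < m then e else 0)
        = (if m = k then q ^ (N - k) * d else 0)
          + (if m ∈ Finset.Ico (k+1) (N+1) then q ^ (N - m) * e else 0) := by
    intro m hm
    simp only [Finset.mem_range] at hm
    rcases eq_or_ne m k with rfl | hmk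
    · simp
    · rcases lt_or_ge k m with h | h
      · have hm' : m ∈ Finset.Ico (k+1) (N+1) := by
          simp only [Finset.mem_Ico]; omega
        simp [hmk, h, hm']
      · have h' : ¬ k < m := by omega
        have hm' : m ∉ Finset.Ico (k+1) (N+1) := by
          simp only [Finset.mem_Ico]; omega
        simp [hmk, h', hm']
  rw [Finset.sum_congr rfl h1, Finset.sum_add_distrib]
  congr 1
  · rw [Finset.sum_ite_eq' (Finset.range (N+1)) k]
    simp [Nat.lt_succ_of_le hk]
  · rw [Finset.sum_ite_mem]
    have hint : Finset.range (N+1) ∩ Finset.Ico (k+1) (N+1) = Finset.Ico (k+1) (N+1) := by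
      apply Finset.inter_eq_right.mpr
      intro x hx
      simp only [Finset.mem_Ico] at hx
      simp only [Finset.mem_range]; omega
    rw [hint, Finset.sum_Ico_eq_sum_range]
    have h2 : N + 1 - (k+1) = N - k := by omega
    rw [h2]
    have h3 : ∀ r ∈ Finset.range (N - k), q ^ (N - (k+1+r)) * e = q ^ (N - k - 1 - r) * e := by
      intro r hr; congr 2; omega
    rw [Finset.sum_congr rfl h3, Finset.sum_range_reflect (fun r => q ^ r * e) (N-k),
      ← Finset.sum_mul, mul_comm]

lemma stmt17_aux_main (l q : ℂ) (hli : l + Complex.I ≠ 0)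
    (hqm : q - 1 = -2*Complex.I/(l+Complex.I)) (t : ℂ) :
    (2/(Complex.I + l)) * (t * (Complex.I/2 + l/2) + Complex.I * ((t - 1)/(q-1))) = 1 := by
  have hil : Complex.I + l ≠ 0 := by rwa [add_comm] at hli
  have hI0 : (Complex.I : ℂ) ≠ 0 := Complex.I_ne_zero
  have hq1 : q - 1 ≠ 0 := by
    rw [hqm]
    exact div_ne_zero (by simp [hI0]) hli
  rw [hqm]
  field_simp
  ring

lemma stmt17_det (p N : ℕ) (l : ℂ) (hil : Complex.I + l ≠ 0)
    (M : Matrix (Fin (N + 1) × Fin p) (Fin (N + 1) × Fin p) ℂ)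
    (hMent : ∀ a b : Fin (N+1) × Fin p, M a b =
      (if a.1 = b.1 then (Complex.I/2 + l/2) * (if a.2 = b.2 then 1 else 0)
       else if b.1 < a.1 then Complex.I * (if a.2 = b.2 then 1 else 0) else 0)) :
    M.det ≠ 0 := by
  let e := finProdFinEquiv (m := N+1) (n := p)
  have hval : ∀ a : Fin (N+1) × Fin p, ((e a : Fin ((N+1)*p)) : ℕ) = a.2 + p * a.1 := fun a => rfl
  have h1 : M.det = (Matrix.reindex e e M).det := (Matrix.det_reindex_self e M).symm
  have h2 : ((Matrix.reindex e e M)ᵀ).BlockTriangular id := by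
    intro x y hxy
    simp only [id] at hxy
    simp only [Matrix.transpose_apply, Matrix.reindex_apply, Matrix.submatrix_apply]
    set a := e.symm y with ha
    set b := e.symm x with hb
    have hy : (y : ℕ) = a.2 + p * a.1 := by
      rw [ha]; rw [← hval (e.symm y), Equiv.apply_symm_apply]
    have hx : (x : ℕ) = b.2 + p * b.1 := by
      rw [hb]; rw [← hval (e.symm x), Equiv.apply_symm_apply]
    rw [hMent]
    have hxy' : (y : ℕ) < (x : ℕ) := hxy
    by_cases h1' : a.1 = b.1
    · have h2' : a.2 ≠ b.2 := by
        intro h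
        have : a = b := Prod.ext h1' h
        rw [this] at hy; omega
      simp [h1', h2']
    · have : ¬ b.1 < a.1 := by
        intro h
        have hb2 : (b.2 : ℕ) < p := b.2.2
        have h' : (b.1 : ℕ) + 1 ≤ (a.1 : ℕ) := h
        have := Nat.mul_le_mul_left p h'
        have hmul : p * ((b.1 : ℕ) + 1) = p * (b.1:ℕ) + p := by ring
        omega
      simp [h1', this]
  have h3 : ((Matrix.reindex e e M)ᵀ).det = ∏ i, (Matrix.reindex e e M)ᵀ i i :=
    Matrix.det_of_upperTriangular h2
  rw [h1, ← Matrix.det_transpose, h3]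
  apply Finset.prod_ne_zero_iff.mpr
  intro i _
  simp only [Matrix.transpose_apply, Matrix.reindex_apply, Matrix.submatrix_apply]
  rw [hMent]
  simp only [if_pos rfl]
  intro h
  apply hil
  have := mul_eq_zero.mp h
  rcases this with h' | h'
  · linear_combination 2 * h'
  · simp at h'

theorem stmt17 (p N : ℕ) (hp : 1 ≤ p)
    (A : Matrix (Fin (N + 1) × Fin p) (Fin (N + 1) × Fin p) ℂ)
    (hA : A = fun ki lj =>
      if ki.1 = lj.1 then (Complex.I / 2) * (if ki.2 = lj.2 then 1 else 0)
      else if lj.1 < ki.1 then Complex.I * (if ki.2 = lj.2 then 1 else 0) else 0)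
    (Φ₁ : Matrix (Fin (N + 1) × Fin p) (Fin p) ℂ)
    (hΦ₁ : Φ₁ = fun ki j => if ki.2 = j then 1 else 0)
    (l : ℂ) (hl1 : l ≠ Complex.I) (hl2 : l ≠ -Complex.I)
    (q : ℂ) (hq : q = (l - Complex.I) / (l + Complex.I)) :
    Φ₁ᴴ * (A + (l / 2) • 1)⁻¹
      = Matrix.of (fun (i : Fin p) (kj : Fin (N + 1) × Fin p) =>
          (2 / (Complex.I + l)) * q ^ (N - (kj.1 : ℕ)) * (if i = kj.2 then 1 else 0)) ∧
    Φ₁ᴴ * (A + (l / 2) • 1)⁻¹ * Φ₁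
      = (2 / (Complex.I + l)) •
          (((q • (1 : Matrix (Fin p) (Fin p) ℂ)) ^ (N + 1) - 1) *
            (q • (1 : Matrix (Fin p) (Fin p) ℂ) - 1)⁻¹) := by
  have hI0 : (Complex.I : ℂ) ≠ 0 := Complex.I_ne_zero
  have hli : l + Complex.I ≠ 0 := fun h => hl2 (by linear_combination h)
  have hil : Complex.I + l ≠ 0 := by rwa [add_comm] at hli
  have hqm : q - 1 = -2 * Complex.I / (l + Complex.I) := by
    rw [hq]; field_simp; ring
  have hq1 : q - 1 ≠ 0 := by
    rw [hqm]; exact div_ne_zero (by simp [hI0]) hli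
  have hqne : q ≠ 1 := fun h => hq1 (by rw [h]; ring)
  set M := A + (l/2) • (1 : Matrix (Fin (N+1) × Fin p) (Fin (N+1) × Fin p) ℂ) with hMdef
  have hMent : ∀ a b : Fin (N+1) × Fin p, M a b =
      (if a.1 = b.1 then (Complex.I/2 + l/2) * (if a.2 = b.2 then 1 else 0)
       else if b.1 < a.1 then Complex.I * (if a.2 = b.2 then 1 else 0) else 0) := by
    intro a b
    rw [hMdef, Matrix.add_apply]
    simp only [hMdef, hA, Matrix.add_apply, Matrix.smul_apply, Matrix.one_apply, smul_eq_mul]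
    by_cases h1 : a.1 = b.1
    · by_cases h2 : a.2 = b.2
      · have hab : a = b := Prod.ext h1 h2
        simp [h1, h2, hab]; try ring
      · have hab : a ≠ b := fun h => h2 (by rw [h])
        simp [h1, h2, hab]
    · have hab : a ≠ b := fun h => h1 (by rw [h])
      simp [h1, hab]
  have hdet : IsUnit M.det := isUnit_iff_ne_zero.mpr (stmt17_det p N l hil M hMent)
  set R : Matrix (Fin p) (Fin (N+1) × Fin p) ℂ :=
    Matrix.of (fun (i : Fin p) (kj : Fin (N + 1) × Fin p) =>
      (2 / (Complex.I + l)) * q ^ (N - (kj.1 : ℕ)) * (if i = kj.2 then 1 else 0)) with hR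
  have key : R * M = Φ₁ᴴ := by
    ext i x
    obtain ⟨k, j⟩ := x
    rw [Matrix.mul_apply, Fintype.sum_prod_type]
    have inner : ∀ m : Fin (N+1),
        (∑ s : Fin p, R i (m, s) * M (m, s) (k, j))
          = (2 / (Complex.I + l)) * q ^ (N - (m:ℕ)) * M (m, i) (k, j) := by
      intro m
      have hterm : ∀ s : Fin p, R i (m, s) * M (m, s) (k, j)
          = if i = s then (2 / (Complex.I + l)) * q ^ (N - (m:ℕ)) * M (m, s) (k, j) else 0 := by
        intro s
        simp only [hR, Matrix.of_apply]
        by_cases h : i = s <;> simp [h]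
      rw [Finset.sum_congr rfl (fun s _ => hterm s), Finset.sum_ite_eq]
      simp
    rw [Finset.sum_congr rfl (fun m _ => inner m)]
    have hΦH : Φ₁ᴴ i (k, j) = if i = j then 1 else 0 := by
      rw [Matrix.conjTranspose_apply]
      simp only [Matrix.conjTranspose_apply, hΦ₁]
      by_cases h : i = j
      · simp [h]
      · have : j ≠ i := fun h' => h h'.symm
        simp [this, h]
    rw [hΦH]
    by_cases hij : i = j
    · subst hij
      have hterm2 : ∀ m : Fin (N+1),
          (2 / (Complex.I + l)) * q ^ (N - (m:ℕ)) * M (m, i) (k, i)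
            = (2 / (Complex.I + l)) * (q ^ (N - (m:ℕ)) *
                (if (m:ℕ) = (k:ℕ) then (Complex.I/2 + l/2)
                 else if (k:ℕ) < (m:ℕ) then Complex.I else 0)) := by
        intro m
        rw [hMent]
        simp only [Fin.val_eq_val, ← Fin.lt_iff_val_lt_val]
        by_cases h1 : m = k
        · simp [h1]; ring
        · by_cases h2 : k < m
          · simp [h1, h2]; ring
          · simp [h1, h2]
      rw [Finset.sum_congr rfl (fun m _ => hterm2 m), ← Finset.mul_sum]
      rw [Fin.sum_univ_eq_sum_range (fun m => q ^ (N - m) *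
            (if m = (k:ℕ) then (Complex.I/2 + l/2)
             else if (k:ℕ) < m then Complex.I else 0)) (N+1)]
      have hk : (k:ℕ) ≤ N := by omega
      rw [stmt17_aux_sum q (Complex.I/2 + l/2) Complex.I N k hk, geom_sum_eq hqne]
      simp only [if_pos rfl]
      exact stmt17_aux_main l q hli hqm (q ^ (N - (k:ℕ)))
    · have hterm0 : ∀ m : Fin (N+1),
          (2 / (Complex.I + l)) * q ^ (N - (m:ℕ)) * M (m, i) (k, j) = 0 := by
        intro m
        rw [hMent]
        simp [hij]
      rw [Finset.sum_congr rfl (fun m _ => hterm0 m)]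
      simp [hij]
  have hMinv : M * M⁻¹ = 1 := Matrix.mul_nonsing_inv M hdet
  have part1 : Φ₁ᴴ * M⁻¹ = R := by
    rw [← key, Matrix.mul_assoc, hMinv, Matrix.mul_one]
  refine ⟨part1, ?_⟩
  rw [part1]
  -- Now show R * Φ₁ = RHS
  have hgeo : ∑ r ∈ Finset.range (N+1), q ^ (N - r) = (q ^ (N+1) - 1)/(q - 1) := by
    have h3 : ∀ r ∈ Finset.range (N+1), q ^ (N - r) = q ^ (N + 1 - 1 - r) := by
      intro r hr; congr 1
    rw [Finset.sum_congr rfl h3, Finset.sum_range_reflect (fun r => q ^ r) (N+1),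
      geom_sum_eq hqne]
  have lhs_eq : R * Φ₁ =
      ((2 / (Complex.I + l)) * ((q ^ (N+1) - 1) * (q - 1)⁻¹)) •
        (1 : Matrix (Fin p) (Fin p) ℂ) := by
    ext i j
    rw [Matrix.mul_apply, Fintype.sum_prod_type]
    have inner2 : ∀ k : Fin (N+1),
        (∑ s : Fin p, R i (k, s) * Φ₁ (k, s) j)
          = (2 / (Complex.I + l)) * q ^ (N - (k:ℕ)) * (if i = j then 1 else 0) := by
      intro k
      have hterm : ∀ s : Fin p, R i (k, s) * Φ₁ (k, s) j
          = if i = s then (2 / (Complex.I + l)) * q ^ (N - (k:ℕ)) *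
              (if s = j then 1 else 0) else 0 := by
        intro s
        simp only [hR, Matrix.of_apply, hΦ₁]
        by_cases h : i = s <;> simp [h]
      rw [Finset.sum_congr rfl (fun s _ => hterm s), Finset.sum_ite_eq]
      simp
    rw [Finset.sum_congr rfl (fun m _ => inner2 m)]
    have : ∀ k : Fin (N+1),
        (2 / (Complex.I + l)) * q ^ (N - (k:ℕ)) * (if i = j then 1 else 0)
          = ((2 / (Complex.I + l)) * (if i = j then 1 else 0)) * q ^ (N - (k:ℕ)) := by
      intro k; ring
    rw [Finset.sum_congr rfl (fun k _ => this k), ← Finset.mul_sum,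
      Fin.sum_univ_eq_sum_range (fun r => q ^ (N - r)) (N+1), hgeo]
    simp only [Matrix.smul_apply, Matrix.one_apply, smul_eq_mul]
    split_ifs <;> ring
  rw [lhs_eq]
  have hpow : (q • (1 : Matrix (Fin p) (Fin p) ℂ)) ^ (N+1)
      = q ^ (N+1) • (1 : Matrix (Fin p) (Fin p) ℂ) := by
    rw [smul_pow, one_pow]
  have hsub1 : q ^ (N+1) • (1 : Matrix (Fin p) (Fin p) ℂ) - 1
      = (q ^ (N+1) - 1) • (1 : Matrix (Fin p) (Fin p) ℂ) := by
    rw [sub_smul, one_smul]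
  have hsub2 : q • (1 : Matrix (Fin p) (Fin p) ℂ) - 1
      = (q - 1) • (1 : Matrix (Fin p) (Fin p) ℂ) := by
    rw [sub_smul, one_smul]
  have hinv : ((q - 1) • (1 : Matrix (Fin p) (Fin p) ℂ))⁻¹
      = (q - 1)⁻¹ • (1 : Matrix (Fin p) (Fin p) ℂ) := by
    apply Matrix.inv_eq_right_inv
    rw [smul_mul_assoc, mul_smul_comm, Matrix.one_mul, smul_smul,
      mul_inv_cancel₀ hq1, one_smul]
  rw [hpow, hsub1, hsub2, hinv, smul_mul_assoc, mul_smul_comm, Matrix.one_mul,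
    smul_smul, smul_smul]
  congr 1
  ring
end

section
/- Given complex p×p matrices α_0, α_1, …, α_N, define Π = [Φ₁ Φ₂] with Φ₁ the column of identity blocks and Φ₂ the column of partial sums α_0 + … + α_k, and define A as the block lower triangular Toeplitz matrix with diagonal blocks (i/2)I_p and lower blocks iI_p. Then the block Toeplitz matrix S = {s_{j-k}}_{k,j=0}^N with s_{-k} = α_k = s_k* for k > 0 and s_0 = α_0 + α_0* satisfies the identity A S - S A* = i Π J Π*, where J = [[0,I_p],[I_p,0]], and S is the unique solution of this identity. -/
/-!
Write `A = (i/2)·1 + i·L`, where `L` is the strictly lower block triangular matrix of identity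
blocks. Then `A S - S A* = i (S + L S + S L*)`. Splitting the Hermitian block Toeplitz matrix
as `S = Γ + Γ*` with `Γ` its lower triangular Toeplitz part, the bracket becomes `X + X*` with
`X = Γ + L Γ + Γ L*`, and `X = Φ₂ Φ₁*` because the `(k, l)` block of `X` telescopes to
`α_0 + ⋯ + α_k`.

For uniqueness, `A - i/2` is nilpotent, and hence so is `A* + i/2`; since `i/2 ≠ -i/2`, the
difference `X` of two solutions satisfies `(A - i/2)ⁿ X = X (A* - i/2)ⁿ` with a vanishing left
side and an invertible power on the right, so `X = 0`.
-/

open Matrix Finset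

-- Induction on `l`: raising `l` shifts the column sum up by one row and moves the entry `(k, l)`
-- from the column sum to the row sum.
theorem sum_lowerToeplitz_column_add_row {M : Type*} [AddCommMonoid M] (α : ℕ → M) (k l : ℕ) :
    ∑ m ∈ range (k + 1), (if l ≤ m then α (m - l) else 0) +
      ∑ m ∈ range l, (if m ≤ k then α (k - m) else 0) = ∑ r ∈ range (k + 1), α r := by
  induction l with
  | zero => simp
  | succ l ih =>
    rw [sum_range_succ', sum_range_succ _ l, ← ih, sum_range_succ _ k]
    simp only [Nat.add_le_add_iff_right, Nat.add_sub_add_right, Nat.le_zero, Nat.add_one_ne_zero,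
      if_false]
    abel

theorem Fin.sum_Iio_val_eq_sum_range {M : Type*} [AddCommMonoid M] {n : ℕ} (f : ℕ → M)
    (k : Fin n) : ∑ m ∈ Iio k, f m = ∑ m ∈ range k, f m := by
  rw [← Nat.Iio_eq_range, ← Fin.map_valEmbedding_Iio, sum_map]
  rfl

theorem eq_zero_of_mul_eq_mul_of_isNilpotent_sub {K R : Type*} [Field K] [Ring R] [Algebra K R]
    {a b : K} (hab : a ≠ b) {A B X : R} (hA : IsNilpotent (A - algebraMap K R a))
    (hB : IsNilpotent (B - algebraMap K R b)) (h : A * X = X * B) : X = 0 := by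
  obtain ⟨n, hn⟩ := hA
  have hunit : IsUnit (B - algebraMap K R a) := by
    have : B - algebraMap K R a = (B - algebraMap K R b) + algebraMap K R (b - a) := by
      rw [map_sub]; abel
    rw [this]
    exact hB.isUnit_add_right_of_commute
      ((isUnit_iff_ne_zero.2 (sub_ne_zero.2 hab.symm)).map _) (Algebra.commutes _ _).symm
  have hsemi : SemiconjBy X (B - algebraMap K R a) (A - algebraMap K R a) := by
    simp only [SemiconjBy, mul_sub, sub_mul, h, Algebra.commutes]
  have := hsemi.pow_right n
  rw [SemiconjBy, hn, zero_mul] at this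
  exact (hunit.pow n).mul_left_eq_zero.1 this

theorem eq_of_mul_sub_mul_star_eq {K R : Type*} [Field K] [StarRing K] [Ring R] [StarRing R]
    [Algebra K R] [StarModule K R] {c : K} (hc : c ≠ star c) {A X Y : R}
    (hA : IsNilpotent (A - algebraMap K R c)) (h : A * X - X * star A = A * Y - Y * star A) :
    X = Y := by
  have hA_star : IsNilpotent (star A - algebraMap K R (star c)) := by
    obtain ⟨m, hm⟩ := hA
    exact ⟨m, by rw [algebraMap_star_comm, ← star_sub, ← star_pow, hm, star_zero]⟩
  refine sub_eq_zero.1 (eq_zero_of_mul_eq_mul_of_isNilpotent_sub hc hA hA_star ?_)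
  rw [mul_sub, sub_mul, sub_eq_sub_iff_sub_eq_sub, h]

namespace Matrix

variable {R : Type*} {n : ℕ}

theorem pow_eq_zero_of_strictLowerTriangular [Semiring R] (M : Matrix (Fin n) (Fin n) R)
    (hM : ∀ k l, k ≤ l → M k l = 0) : M ^ n = 0 := by
  have key : ∀ t (k l : Fin n), (k : ℕ) < l + t → (M ^ t) k l = 0 := by
    intro t
    induction t with
    | zero => intro k l h; exact one_apply_ne (by rintro rfl; omega)
    | succ t ih =>
      intro k l h
      rw [pow_succ', mul_apply]
      refine sum_eq_zero fun m _ => ?_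
      rcases le_or_gt k m with hkm | hmk
      · rw [hM k m hkm, zero_mul]
      · rw [ih m l (by omega), mul_zero]
  ext k l
  exact key n k l (by omega)

def strictLowerOnes (n : ℕ) (R : Type*) [Zero R] [One R] : Matrix (Fin n) (Fin n) R :=
  of fun k l => if l < k then 1 else 0

def lowerToeplitz [Zero R] (α : ℕ → R) : Matrix (Fin n) (Fin n) R :=
  of fun k l => if l ≤ k then α (k - l) else 0

def hermitianToeplitz [AddMonoid R] [StarAddMonoid R] (α : ℕ → R) : Matrix (Fin n) (Fin n) R :=
  lowerToeplitz α + (lowerToeplitz α)ᴴ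

theorem isNilpotent_strictLowerOnes [Semiring R] : IsNilpotent (strictLowerOnes n R) :=
  ⟨n, pow_eq_zero_of_strictLowerTriangular _ fun _ _ hkl => if_neg hkl.not_gt⟩

theorem strictLowerOnes_mul_apply [NonAssocSemiring R] (M : Matrix (Fin n) (Fin n) R)
    (k l : Fin n) : (strictLowerOnes n R * M) k l = ∑ m ∈ Iio k, M m l := by
  simp [strictLowerOnes, mul_apply, ite_mul, Finset.sum_ite, Finset.filter_gt_eq_Iio]

theorem mul_strictLowerOnes_transpose_apply [NonAssocSemiring R] (M : Matrix (Fin n) (Fin n) R)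
    (k l : Fin n) : (M * (strictLowerOnes n R)ᵀ) k l = ∑ m ∈ Iio l, M k m := by
  simp [strictLowerOnes, mul_apply, mul_ite, Finset.sum_ite, Finset.filter_gt_eq_Iio]

theorem conjTranspose_strictLowerOnes [Semiring R] [StarRing R] :
    (strictLowerOnes n R)ᴴ = (strictLowerOnes n R)ᵀ := by
  ext k l
  simp [strictLowerOnes, apply_ite star]

theorem lowerToeplitz_add_strictLowerOnes_mul_add_mul_transpose [Semiring R] (α : ℕ → R) :
    lowerToeplitz α + strictLowerOnes n R * lowerToeplitz α +
        lowerToeplitz α * (strictLowerOnes n R)ᵀ =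
      of fun (k _ : Fin n) => ∑ r ∈ range ((k : ℕ) + 1), α r := by
  ext k l
  rw [add_apply, add_apply, strictLowerOnes_mul_apply, mul_strictLowerOnes_transpose_apply]
  simp only [lowerToeplitz, of_apply, Fin.le_def]
  rw [Fin.sum_Iio_val_eq_sum_range (fun m => if (l : ℕ) ≤ m then α (m - l) else 0),
    Fin.sum_Iio_val_eq_sum_range (fun m => if m ≤ (k : ℕ) then α (k - m) else 0),
    add_comm (ite _ _ _), ← sum_range_succ, sum_lowerToeplitz_column_add_row]

theorem hermitianToeplitz_add_strictLowerOnes_mul_add_mul_conjTranspose [Semiring R] [StarRing R]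
    (α : ℕ → R) :
    hermitianToeplitz α + strictLowerOnes n R * hermitianToeplitz α +
        hermitianToeplitz α * (strictLowerOnes n R)ᴴ =
      of (fun (k _ : Fin n) => ∑ r ∈ range ((k : ℕ) + 1), α r) +
        (of fun (k _ : Fin n) => ∑ r ∈ range ((k : ℕ) + 1), α r)ᴴ := by
  rw [← lowerToeplitz_add_strictLowerOnes_mul_add_mul_transpose, ← conjTranspose_strictLowerOnes]
  simp only [hermitianToeplitz, conjTranspose_add, conjTranspose_mul, conjTranspose_conjTranspose,
    mul_add, add_mul]
  abel

theorem comp_conjTranspose {I J K : Type*} [Star R] (M : Matrix I J (Matrix K K R)) :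
    comp J I K K R Mᴴ = (comp I J K K R M)ᴴ := rfl

variable {p : ℕ}

theorem compRingEquiv_smul_one_add_smul_strictLowerOnes_apply [CommSemiring R] (c d : R)
    (k l : Fin n) (i j : Fin p) :
    (c • 1 + d • compRingEquiv (Fin n) (Fin p) R (strictLowerOnes n _)) (k, i) (l, j) =
      if k = l then c * (if i = j then 1 else 0)
      else if l < k then d * (if i = j then 1 else 0) else 0 := by
  simp only [strictLowerOnes, compRingEquiv_apply, add_apply, smul_apply, one_apply,
    Prod.mk.injEq, smul_eq_mul, mul_ite, mul_one, mul_zero, comp_apply, of_apply]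
  split_ifs <;> simp_all [one_apply]

theorem compRingEquiv_hermitianToeplitz_apply [Semiring R] [StarRing R]
    (α : ℕ → Matrix (Fin p) (Fin p) R) (k l : Fin n) (i j : Fin p) :
    compRingEquiv (Fin n) (Fin p) R (hermitianToeplitz α) (k, i) (l, j) =
      if k = l then (α 0 + (α 0)ᴴ) i j
      else if (l : ℕ) < k then α (k - l) i j else (α (l - k))ᴴ i j := by
  rcases lt_trichotomy k l with h | rfl | h
  · simp [hermitianToeplitz, lowerToeplitz, h.ne, h.not_gt, h.not_ge, h.le]
  · simp [hermitianToeplitz, lowerToeplitz]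
  · simp [hermitianToeplitz, lowerToeplitz, h.ne', h, h.not_ge, h.le]

theorem half_I_smul_one_add_I_smul_mul_sub_mul_conjTranspose {m : Type*} [Fintype m]
    [DecidableEq m] (L S : Matrix m m ℂ) :
    ((Complex.I / 2) • 1 + Complex.I • L) * S - S * ((Complex.I / 2) • 1 + Complex.I • L)ᴴ =
      Complex.I • (S + L * S + S * Lᴴ) := by
  simp only [conjTranspose_add, conjTranspose_smul, conjTranspose_one, add_mul, mul_add,
    Matrix.smul_mul, Matrix.mul_smul, one_mul, mul_one, Complex.star_def, map_div₀,
    Complex.conj_I, Complex.conj_ofNat]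
  module

theorem fromCols_mul_fromBlocks_zero_one_mul_conjTranspose {m k : Type*} [Fintype k]
    [DecidableEq k] [Semiring R] [StarRing R] (Φ₁ Φ₂ : Matrix m k R) :
    fromCols Φ₁ Φ₂ * (fromBlocks 0 1 1 0 : Matrix (k ⊕ k) (k ⊕ k) R) * (fromCols Φ₁ Φ₂)ᴴ =
      Φ₂ * Φ₁ᴴ + (Φ₂ * Φ₁ᴴ)ᴴ := by
  rw [fromCols_mul_fromBlocks, conjTranspose_fromCols_eq_fromRows_conjTranspose,
    fromCols_mul_fromRows]
  simp [add_comm]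

end Matrix

theorem stmt18_general (p N : ℕ)
    (α : ℕ → Matrix (Fin p) (Fin p) ℂ)
    (A : Matrix (Fin (N + 1) × Fin p) (Fin (N + 1) × Fin p) ℂ)
    (hA : A = fun ki lj =>
      if ki.1 = lj.1 then (Complex.I / 2) * (if ki.2 = lj.2 then 1 else 0)
      else if lj.1 < ki.1 then Complex.I * (if ki.2 = lj.2 then 1 else 0) else 0)
    (Φ₁ Φ₂ : Matrix (Fin (N + 1) × Fin p) (Fin p) ℂ)
    (hΦ₁ : Φ₁ = fun ki j => if ki.2 = j then 1 else 0)
    (hΦ₂ : Φ₂ = fun ki j => (∑ r ∈ Finset.range ((ki.1 : ℕ) + 1), α r) ki.2 j)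
    (Pi : Matrix (Fin (N + 1) × Fin p) (Fin p ⊕ Fin p) ℂ)
    (hPi : Pi = Matrix.fromCols Φ₁ Φ₂)
    (J : Matrix (Fin p ⊕ Fin p) (Fin p ⊕ Fin p) ℂ)
    (hJ : J = Matrix.fromBlocks 0 1 1 0)
    (S : Matrix (Fin (N + 1) × Fin p) (Fin (N + 1) × Fin p) ℂ)
    (hS : S = fun ki lj =>
      if ki.1 = lj.1 then (α 0 + (α 0)ᴴ) ki.2 lj.2
      else if (lj.1 : ℕ) < (ki.1 : ℕ) then α ((ki.1 : ℕ) - (lj.1 : ℕ)) ki.2 lj.2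
      else (α ((lj.1 : ℕ) - (ki.1 : ℕ)))ᴴ ki.2 lj.2) :
    A * S - S * Aᴴ = Complex.I • (Pi * J * Piᴴ) ∧
    ∀ S' : Matrix (Fin (N + 1) × Fin p) (Fin (N + 1) × Fin p) ℂ,
      A * S' - S' * Aᴴ = Complex.I • (Pi * J * Piᴴ) → S' = S := by
  let blocks := compRingEquiv (Fin (N + 1)) (Fin p) ℂ
  have blocks_conjTranspose : ∀ M, blocks Mᴴ = (blocks M)ᴴ := comp_conjTranspose
  let L := blocks (strictLowerOnes (N + 1) _)
  have hA' : A = (Complex.I / 2) • 1 + Complex.I • L := by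
    subst hA
    ext ⟨k, i⟩ ⟨l, j⟩
    exact (compRingEquiv_smul_one_add_smul_strictLowerOnes_apply _ _ k l i j).symm
  have hS' : S = blocks (hermitianToeplitz α) := by
    subst hS
    ext ⟨k, i⟩ ⟨l, j⟩
    exact (compRingEquiv_hermitianToeplitz_apply α k l i j).symm
  have hΦ : Φ₂ * Φ₁ᴴ = blocks (of fun k _ => ∑ r ∈ range ((k : ℕ) + 1), α r) := by
    ext ⟨k, i⟩ ⟨l, j⟩
    rw [mul_apply]
    simp only [conjTranspose_apply]
    simp [blocks, hΦ₁, hΦ₂]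
  have hmain : A * S - S * Aᴴ = Complex.I • (Pi * J * Piᴴ) := by
    rw [hA', half_I_smul_one_add_I_smul_mul_sub_mul_conjTranspose, hPi, hJ,
      fromCols_mul_fromBlocks_zero_one_mul_conjTranspose, hΦ, ← blocks_conjTranspose (of _),
      ← map_add blocks, ← hermitianToeplitz_add_strictLowerOnes_mul_add_mul_conjTranspose, hS']
    simp only [L, map_add, map_mul, blocks_conjTranspose]
  refine ⟨hmain, fun S' hS'_eq => ?_⟩
  have hnil : IsNilpotent (A - algebraMap ℂ _ (Complex.I / 2)) := by
    rw [Algebra.algebraMap_eq_smul_one, hA', add_sub_cancel_left]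
    exact (isNilpotent_strictLowerOnes.map blocks).smul _
  exact eq_of_mul_sub_mul_star_eq (by norm_num [Complex.ext_iff]) hnil
    (by simpa only [star_eq_conjTranspose, hmain] using hS'_eq)

theorem stmt18 (p N : ℕ) (hp : 1 ≤ p)
    (α : ℕ → Matrix (Fin p) (Fin p) ℂ)
    (A : Matrix (Fin (N + 1) × Fin p) (Fin (N + 1) × Fin p) ℂ)
    (hA : A = fun ki lj =>
      if ki.1 = lj.1 then (Complex.I / 2) * (if ki.2 = lj.2 then 1 else 0)
      else if lj.1 < ki.1 then Complex.I * (if ki.2 = lj.2 then 1 else 0) else 0)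
    (Φ₁ Φ₂ : Matrix (Fin (N + 1) × Fin p) (Fin p) ℂ)
    (hΦ₁ : Φ₁ = fun ki j => if ki.2 = j then 1 else 0)
    (hΦ₂ : Φ₂ = fun ki j => (∑ r ∈ Finset.range ((ki.1 : ℕ) + 1), α r) ki.2 j)
    (Pi : Matrix (Fin (N + 1) × Fin p) (Fin p ⊕ Fin p) ℂ)
    (hPi : Pi = Matrix.fromCols Φ₁ Φ₂)
    (J : Matrix (Fin p ⊕ Fin p) (Fin p ⊕ Fin p) ℂ)
    (hJ : J = Matrix.fromBlocks 0 1 1 0)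
    (S : Matrix (Fin (N + 1) × Fin p) (Fin (N + 1) × Fin p) ℂ)
    (hS : S = fun ki lj =>
      if ki.1 = lj.1 then (α 0 + (α 0)ᴴ) ki.2 lj.2
      else if (lj.1 : ℕ) < (ki.1 : ℕ) then α ((ki.1 : ℕ) - (lj.1 : ℕ)) ki.2 lj.2
      else (α ((lj.1 : ℕ) - (ki.1 : ℕ)))ᴴ ki.2 lj.2) :
    A * S - S * Aᴴ = Complex.I • (Pi * J * Piᴴ) ∧
    ∀ S' : Matrix (Fin (N + 1) × Fin p) (Fin (N + 1) × Fin p) ℂ,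
      A * S' - S' * Aᴴ = Complex.I • (Pi * J * Piᴴ) → S' = S :=
  stmt18_general p N α A hA Φ₁ Φ₂ hΦ₁ hΦ₂ Pi hPi J hJ S hS
end
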